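/- Let w, b, t₀, d, q, g, s, ν be integers with w ≥ 2, 1 ≤ b ≤ w − 2, 1 ≤ t₀ ≤ w − 2, b ≠ t₀, d = b or d = b + 1, and s ≥ 0. Set E := 4wg − 2w − 2t₀ − 2qw + 2b − 2d and F := w²(2ν − 1) − (d + t₀w + qw²). If max(0, E) = w²·s + 2·max(0, F), then E ≤ 0, s = 0, and F ≤ 0 (i.e. both sides of the equation are identically zero). -/
import Mathlib

/-- If `w*P + w*k = w*w*s` with `w ≠ 0` then `P + k = w*s`. -/
private lemma cancel_w (w P k s : ℤ) (hw : w ≠ 0)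
    (h : w * P + w * k = w * w * s) : P + k = w * s := by
  have h2 : w * (P + k) = w * (w * s) := by linear_combination h
  exact mul_left_cancel₀ hw h2

/-- From `w*P + w*k = w*w*s`, `2 ∣ P`, `2 ∣ w`, `k = 1 ∨ k = -1`, `w ≠ 0`: contradiction. -/
private lemma parity_contra (w P k s : ℤ) (hw : w ≠ 0) (hP : 2 ∣ P) (hwe : 2 ∣ w)
    (hk : k = 1 ∨ k = -1) (h : w * P + w * k = w * w * s) : False := by
  have hcan : P + k = w * s := cancel_w w P k s hw h
  obtain ⟨a, ha⟩ := hwe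
  have hws : w * s = 2 * (a * s) := by rw [ha]; ring
  obtain ⟨c, hc⟩ := hP
  omega

/-- Integer-arithmetic content of the first Claim in the proof of Theorem 1.1:
the surgery-rank equation `t^m_{P(K)} = w² s_K + t^{m/w²}_K` forces both sides to vanish. -/
theorem stmt0 (w b t₀ d q g s ν : ℤ)
    (hw : 2 ≤ w) (hb1 : 1 ≤ b) (hb2 : b ≤ w - 2)
    (ht1 : 1 ≤ t₀) (ht2 : t₀ ≤ w - 2) (hbt : b ≠ t₀)
    (hd : d = b ∨ d = b + 1) (hs : 0 ≤ s)
    (E F : ℤ)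
    (hE : E = 4 * w * g - 2 * w - 2 * t₀ - 2 * q * w + 2 * b - 2 * d)
    (hF : F = w ^ 2 * (2 * ν - 1) - (d + t₀ * w + q * w ^ 2))
    (h : max 0 E = w ^ 2 * s + 2 * max 0 F) :
    E ≤ 0 ∧ s = 0 ∧ F ≤ 0 := by
  have hw0 : (0:ℤ) < w := by linarith
  have hwne : w ≠ 0 := by linarith
  rcases le_or_gt E 0 with hE0 | hE0
  · -- E ≤ 0 : both sides must vanish
    have hmE : max 0 E = 0 := max_eq_left hE0
    have hMF : 0 ≤ max 0 F := le_max_left _ _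
    have hws : 0 ≤ w ^ 2 * s := by positivity
    have h1 : w ^ 2 * s = 0 := by omega
    have h2 : max 0 F = 0 := by omega
    have hs0 : s = 0 := by
      rcases mul_eq_zero.mp h1 with h' | h'
      · exact absurd h' (by positivity)
      · exact h'
    refine ⟨hE0, hs0, ?_⟩
    by_contra hF0
    push_neg at hF0
    rw [max_eq_right hF0.le] at h2
    omega
  · -- E > 0 : derive a contradiction
    exfalso
    have hmE : max 0 E = E := max_eq_right hE0.le
    rcases le_or_gt F 0 with hF0 | hF0
    · -- F ≤ 0 : E = w² s
      have hmF : max 0 F = 0 := max_eq_left hF0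
      rw [hmE, hmF] at h
      obtain ⟨P, hPeven, hEq2⟩ :
          ∃ P : ℤ, 2 ∣ P ∧ w * P + 2 * (b - t₀ - d) = w * w * s := by
        refine ⟨2 * (2 * g - 1 - q), ⟨_, rfl⟩, ?_⟩
        subst hE hF
        linear_combination h
      -- w divides the remainder term
      have hdvd : w ∣ 2 * (b - t₀ - d) :=
        ⟨w * s - P, by linear_combination hEq2⟩
      obtain ⟨k, hk⟩ := hdvd
      have hr1 : -2 * w < w * k := by rcases hd with h' | h' <;> omega
      have hr2 : w * k < 0 := by rcases hd with h' | h' <;> omega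
      have hk1 : k = -1 := by
        have h1 : -2 < k := by nlinarith
        have h2 : k < 0 := by nlinarith
        omega
      subst hk1
      have hweven : 2 ∣ w := by rcases hd with h' | h' <;> omega
      exact parity_contra w P (-1) s hwne hPeven hweven (Or.inr rfl)
        (by rw [show w * (-1) = -w by ring]; omega)
    · -- F > 0 : E - 2F = w² s
      have hmF : max 0 F = F := max_eq_right hF0.le
      rw [hmE, hmF] at h
      obtain ⟨P, hPeven, hEq2⟩ :
          ∃ P : ℤ, 2 ∣ P ∧ w * P + 2 * (b - t₀) = w * w * s := by
        refine ⟨2 * (2 * g - 1 - q + t₀ + q * w - 2 * w * ν + w), ⟨_, rfl⟩, ?_⟩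
        subst hE hF
        linear_combination h
      have hdvd : w ∣ 2 * (b - t₀) :=
        ⟨w * s - P, by linear_combination hEq2⟩
      obtain ⟨k, hk⟩ := hdvd
      have hr1 : -2 * w < w * k := by omega
      have hr2 : w * k < 2 * w := by omega
      have hr3 : w * k ≠ 0 := by omega
      have hk1 : k = -1 ∨ k = 1 := by
        have hk0 : k ≠ 0 := by rintro rfl; simp at hr3
        have h1 : -2 < k := by nlinarith
        have h2 : k < 2 := by nlinarith
        omega
      have hweven : 2 ∣ w := by rcases hk1 with h' | h' <;> rw [h'] at hk <;> omega
      refine parity_contra w P k s hwne hPeven hweven hk1.symm ?_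
      have : w * k = 2 * (b - t₀) := hk.symm
      omega
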